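/- Let V be an n-dimensional real vector space with a nondegenerate symmetric bilinear form and let 1 ≤ p ≤ n−1. Suppose β ∈ Λ^{p+1}V* and γ ∈ Λ^{p−1}V* satisfy ι_X β = X♭ ∧ γ for every X ∈ V. Then β = 0 and γ = 0. -/

import Mathlib

set_option synthInstance.maxHeartbeats 1000000
set_option maxHeartbeats 1000000

/-- The algebra of exterior forms on `V`: the exterior algebra of the dual space `V*`. -/
abbrev FormAlg (V : Type*) [AddCommGroup V] [Module ℝ V] : Type _ :=
  ExteriorAlgebra ℝ (Module.Dual ℝ V)

variable {V : Type*} [AddCommGroup V] [Module ℝ V]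

/-- Interior product (contraction) `ι_v` of a vector `v` into forms. -/
noncomputable def iprod (v : V) (α : FormAlg V) : FormAlg V :=
  CliffordAlgebra.contractLeft (Q := (0 : QuadraticForm ℝ (Module.Dual ℝ V)))
    (Module.Dual.eval ℝ V v) α

/-- The metric dual (musical `♭`) of a vector. -/
noncomputable def flat (g : LinearMap.BilinForm ℝ V) (v : V) : Module.Dual ℝ V := g v

/-- Wedge product of a covector with a form. -/
noncomputable def cwedge (f : Module.Dual ℝ V) (α : FormAlg V) : FormAlg V :=
  ExteriorAlgebra.ι ℝ (M := Module.Dual ℝ V) f * α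

/-- Wedge product `v♭ ∧ α` of the metric dual of a vector with a form. -/
noncomputable def flatWedge (g : LinearMap.BilinForm ℝ V) (v : V) (α : FormAlg V) :
    FormAlg V :=
  cwedge (flat g v) α

/-- The decomposable form `x₁♭ ∧ ⋯ ∧ x_p♭`. -/
noncomputable def flatMulti (g : LinearMap.BilinForm ℝ V) (p : ℕ) (x : Fin p → V) :
    FormAlg V :=
  ExteriorAlgebra.ιMulti ℝ p (M := Module.Dual ℝ V) (fun i => flat g (x i))

/-- Wedge product of two forms. -/
noncomputable def wedgeF (α β : FormAlg V) : FormAlg V := α * β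

lemma euler_identity {M : Type*} [AddCommGroup M] [Module ℝ M]
    {ι' : Type*} [Fintype ι'] (m : ι' → M) (d : ι' → Module.Dual ℝ M)
    (hdual : ∀ x : M, ∑ i, d i x • m i = x)
    (k : ℕ) (ω : ExteriorAlgebra ℝ M) (hω : ω ∈ ⋀[ℝ]^k M) :
    ∑ i, ExteriorAlgebra.ι ℝ (m i) *
      (CliffordAlgebra.contractLeft (Q := (0 : QuadraticForm ℝ M)) (d i) ω)
      = (k : ℝ) • ω := by
  induction hω using Submodule.pow_induction_on_left' with
  | algebraMap r =>
    simp [CliffordAlgebra.contractLeft_algebraMap]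
  | add x y i hx hy ihx ihy =>
    simp only [map_add, mul_add, Finset.sum_add_distrib, ihx, ihy, smul_add]
  | mem_mul a ha i x hx ih =>
    obtain ⟨v, rfl⟩ := ha
    have step : ∀ j : ι', ExteriorAlgebra.ι ℝ (m j) *
          (CliffordAlgebra.contractLeft (Q := (0 : QuadraticForm ℝ M)) (d j)
            (ExteriorAlgebra.ι ℝ v * x))
        = d j v • (ExteriorAlgebra.ι ℝ (m j) * x)
            + ExteriorAlgebra.ι ℝ v * (ExteriorAlgebra.ι ℝ (m j) *
              (CliffordAlgebra.contractLeft (Q := (0 : QuadraticForm ℝ M)) (d j) x)) := by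
      intro j
      rw [CliffordAlgebra.contractLeft_ι_mul, mul_sub, mul_smul_comm]
      have hswap : ExteriorAlgebra.ι ℝ (m j) * ExteriorAlgebra.ι ℝ v
          = - (ExteriorAlgebra.ι ℝ v * ExteriorAlgebra.ι ℝ (m j)) := by
        rw [eq_neg_iff_add_eq_zero]
        exact ExteriorAlgebra.ι_add_mul_swap (m j) v
      rw [← mul_assoc, hswap, neg_mul, mul_assoc, sub_neg_eq_add]
    rw [Finset.sum_congr rfl fun j _ => step j, Finset.sum_add_distrib]
    have h1 : ∑ j, (d j) v • (ExteriorAlgebra.ι ℝ (m j) * x) = ExteriorAlgebra.ι ℝ v * x := by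
      simp_rw [← smul_mul_assoc, ← LinearMap.map_smul]
      rw [← Finset.sum_mul, ← map_sum, hdual v]
    have h2 : ∑ j, ExteriorAlgebra.ι ℝ v * (ExteriorAlgebra.ι ℝ (m j) *
        (CliffordAlgebra.contractLeft (Q := (0 : QuadraticForm ℝ M)) (d j)) x)
        = (i : ℝ) • (ExteriorAlgebra.ι ℝ v * x) := by
      rw [← Finset.mul_sum]
      have : ∑ j, ExteriorAlgebra.ι ℝ (m j) *
          (CliffordAlgebra.contractLeft (Q := (0 : QuadraticForm ℝ M)) (d j)) x = (i:ℝ) • x := ih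
      rw [this, mul_smul_comm]
    rw [h1, h2]
    rw [Nat.succ_eq_add_one]
    push_cast
    rw [add_smul, one_smul, add_comm]

/-- If a `(p+1)`-form `β` and a `(p-1)`-form `γ` (with `1 ≤ p ≤ n-1`) on an
`n`-dimensional space with nondegenerate symmetric bilinear form satisfy
`ι_X β = X♭ ∧ γ` for every vector `X`, then `β = 0` and `γ = 0`. -/
theorem stmt_6 [FiniteDimensional ℝ V]
    (n p : ℕ) (hdim : Module.finrank ℝ V = n) (hp : 1 ≤ p) (hpn : p ≤ n - 1)
    (g : LinearMap.BilinForm ℝ V) (hsymm : g.IsSymm) (hnd : g.Nondegenerate)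
    (β γ : FormAlg V)
    (hβ : β ∈ ⋀[ℝ]^(p + 1) (Module.Dual ℝ V))
    (hγ : γ ∈ ⋀[ℝ]^(p - 1) (Module.Dual ℝ V))
    (h : ∀ X : V, iprod X β = flatWedge g X γ) :
    β = 0 ∧ γ = 0 := by
  subst hdim
  simp only [iprod, flatWedge, cwedge, flat] at h
  obtain ⟨b, hb⟩ := LinearMap.BilinForm.exists_orthogonal_basis (B := g) (LinearMap.BilinForm.isSymm_iff.mp hsymm)
  set m : Fin (Module.finrank ℝ V) → Module.Dual ℝ V := fun i => (g (b i) (b i))⁻¹ • g (b i) with hm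
  set d : Fin (Module.finrank ℝ V) → Module.Dual ℝ (Module.Dual ℝ V) :=
    fun i => Module.Dual.eval ℝ V (b i) with hd
  have hι : (ExteriorAlgebra.ι ℝ : Module.Dual ℝ V →ₗ[ℝ] FormAlg V)
      = CliffordAlgebra.ι (0 : QuadraticForm ℝ (Module.Dual ℝ V)) := rfl
  have hlam : ∀ i, g (b i) (b i) ≠ 0 := fun i => by
    have := LinearMap.BilinForm.iIsOrtho.not_isOrtho_basis_self_of_nondegenerate hb hnd i
    exact this
  have hdual : ∀ f : Module.Dual ℝ V, ∑ i, d i f • m i = f := by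
    intro f
    refine b.ext fun j => ?_
    simp only [LinearMap.coe_sum, Finset.sum_apply, LinearMap.smul_apply, smul_eq_mul,
      hm, hd, Module.Dual.eval_apply]
    rw [Finset.sum_eq_single j]
    · rw [inv_mul_cancel₀ (hlam j), mul_one]
    · intro i _ hij
      rw [show g (b i) (b j) = 0 from hb hij, mul_zero, mul_zero]
    · intro hj; exact absurd (Finset.mem_univ j) hj
  have hβ0 : β = 0 := by
    have he := euler_identity m d hdual (p + 1) β hβ
    have hz : ∀ i ∈ Finset.univ, ExteriorAlgebra.ι ℝ (m i) *
        (CliffordAlgebra.contractLeft (Q := (0 : QuadraticForm ℝ (Module.Dual ℝ V)))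
          (d i) β) = 0 := by
      intro i _
      have hc : CliffordAlgebra.contractLeft
          (Q := (0 : QuadraticForm ℝ (Module.Dual ℝ V))) (d i) β
          = ExteriorAlgebra.ι ℝ (g (b i)) * γ := h (b i)
      rw [hc, hm]
      simp only [map_smul, smul_mul_assoc, ← mul_assoc, ExteriorAlgebra.ι_sq_zero,
        zero_mul, smul_zero]
    rw [Finset.sum_eq_zero hz] at he
    have hne : ((p + 1 : ℕ) : ℝ) ≠ 0 := by positivity
    exact (smul_eq_zero.mp he.symm).resolve_left hne
  refine ⟨hβ0, ?_⟩
  have h' : ∀ X : V, ExteriorAlgebra.ι ℝ ((g X : Module.Dual ℝ V)) * γ = 0 := by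
    intro X
    rw [← h X, hβ0, map_zero]
  have hγe := euler_identity m d hdual (p - 1) γ hγ
  have hterm : ∀ i ∈ Finset.univ, ExteriorAlgebra.ι ℝ (m i) *
      (CliffordAlgebra.contractLeft (Q := (0 : QuadraticForm ℝ (Module.Dual ℝ V)))
        (d i) γ) = γ := by
    intro i _
    have hmγ : ExteriorAlgebra.ι ℝ (m i) * γ = 0 := by
      rw [hm, map_smul, smul_mul_assoc, h' (b i), smul_zero]
    have key := CliffordAlgebra.contractLeft_ι_mul
      (Q := (0 : QuadraticForm ℝ (Module.Dual ℝ V))) (d := d i) (m i) γ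
    rw [← hι, hmγ, map_zero] at key
    have h1 : d i (m i) = 1 := by
      rw [hd, hm, Module.Dual.eval_apply, LinearMap.smul_apply, smul_eq_mul]
      exact inv_mul_cancel₀ (hlam i)
    rw [eq_comm, sub_eq_zero] at key
    rw [← key, h1, one_smul]
  rw [Finset.sum_congr rfl hterm, Finset.sum_const, Finset.card_univ, Fintype.card_fin] at hγe
  rw [← Nat.cast_smul_eq_nsmul ℝ (Module.finrank ℝ V) γ] at hγe
  have hne : ((p - 1 : ℕ) : ℝ) ≠ ((Module.finrank ℝ V) : ℝ) := by
    have : p - 1 < Module.finrank ℝ V := by omega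
    exact_mod_cast this.ne
  have hz := sub_smul ((p - 1 : ℕ) : ℝ) ((Module.finrank ℝ V) : ℝ) γ
  rw [hγe, sub_self] at hz
  exact (smul_eq_zero.mp hz).resolve_left (sub_ne_zero.mpr hne)
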